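/- Let G₁ and G₂ be finite connected simple graphs with k₁ and k₂ peripheral vertices respectively. Then PW(G₁ □ G₂) = k₂²·PW(G₁) + k₁²·PW(G₂). -/

import Mathlib

open Finset SimpleGraph

noncomputable section

/-- Eccentricity of a vertex: maximum distance to any vertex. -/
def ecc {V : Type*} [Fintype V] (G : SimpleGraph V) (u : V) : ℕ :=
  Finset.univ.sup (G.dist u)

/-- Diameter: maximum eccentricity. -/
def gdiam {V : Type*} [Fintype V] (G : SimpleGraph V) : ℕ :=
  Finset.univ.sup (ecc G)

/-- The set of peripheral vertices: vertices of maximum eccentricity. -/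
def peri {V : Type*} [Fintype V] [DecidableEq V] (G : SimpleGraph V) : Finset V :=
  Finset.univ.filter (fun u => ecc G u = gdiam G)

/-- Wiener index: sum of distances over unordered pairs of distinct vertices. -/
def wiener {V : Type*} [Fintype V] [DecidableEq V] (G : SimpleGraph V) : ℚ :=
  (1/2) * ∑ p ∈ (Finset.univ : Finset V).offDiag, (G.dist p.1 p.2 : ℚ)

/-- Hyper-Wiener index. -/
def hyperWiener {V : Type*} [Fintype V] [DecidableEq V] (G : SimpleGraph V) : ℚ :=
  (1/4) * ∑ p ∈ (Finset.univ : Finset V).offDiag,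
    ((G.dist p.1 p.2 : ℚ) + (G.dist p.1 p.2 : ℚ) ^ 2)

/-- Peripheral Wiener index. -/
def periWiener {V : Type*} [Fintype V] [DecidableEq V] (G : SimpleGraph V) : ℚ :=
  (1/2) * ∑ p ∈ (peri G).offDiag, (G.dist p.1 p.2 : ℚ)

/-- Peripheral hyper-Wiener index. -/
def periHyperWiener {V : Type*} [Fintype V] [DecidableEq V] (G : SimpleGraph V) : ℚ :=
  (1/4) * ∑ p ∈ (peri G).offDiag,
    ((G.dist p.1 p.2 : ℚ) + (G.dist p.1 p.2 : ℚ) ^ 2)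

end

/-!
Distances in `G □ H` add coordinatewise, so eccentricities and diameters add as well, and a
vertex `(a, b)` is peripheral exactly when `a` and `b` both are: `Peri(G □ H) = Peri G × Peri H`.
Summing `d(a, c) + d(b, d)` over ordered pairs of `Peri G × Peri H` then counts every distance of
`G` once for each of the `k₂²` choices of `(b, d)`, and symmetrically; diagonal pairs contribute
zero, so the sums over distinct pairs behave the same way.
-/

namespace SimpleGraph

variable {α β : Type*} {G : SimpleGraph α} {H : SimpleGraph β}

lemma dist_boxProd (hG : G.Preconnected) (hH : H.Preconnected) (x y : α × β) :
    (G □ H).dist x y = G.dist x.1 y.1 + H.dist x.2 y.2 := by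
  have h₁ := hG x.1 y.1
  have h₂ := hH x.2 y.2
  have h : (G □ H).Reachable x y := reachable_boxProd.2 ⟨h₁, h₂⟩
  apply Nat.cast_injective (R := ℕ∞)
  rw [Nat.cast_add, h.coe_dist_eq_edist, h₁.coe_dist_eq_edist, h₂.coe_dist_eq_edist,
    edist_boxProd]

variable [Fintype α] [Fintype β] [Nonempty α] [Nonempty β]

lemma ecc_boxProd (hG : G.Preconnected) (hH : H.Preconnected) (x : α × β) :
    ecc (G □ H) x = ecc G x.1 + ecc H x.2 := by
  rw [ecc, ecc, ecc, sup_add_sup univ_nonempty univ_nonempty, univ_product_univ]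
  exact congrArg _ (funext (dist_boxProd hG hH x))

lemma gdiam_boxProd (hG : G.Preconnected) (hH : H.Preconnected) :
    gdiam (G □ H) = gdiam G + gdiam H := by
  rw [gdiam, gdiam, gdiam, sup_add_sup univ_nonempty univ_nonempty, univ_product_univ]
  exact congrArg _ (funext (ecc_boxProd hG hH))

lemma peri_boxProd [DecidableEq α] [DecidableEq β] (hG : G.Preconnected) (hH : H.Preconnected) :
    peri (G □ H) = peri G ×ˢ peri H := by
  ext ⟨a, b⟩
  have ha : ecc G a ≤ gdiam G := le_sup (mem_univ a)
  have hb : ecc H b ≤ gdiam H := le_sup (mem_univ b)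
  simp only [peri, mem_filter, mem_univ, true_and, mem_product, ecc_boxProd hG hH,
    gdiam_boxProd hG hH]
  omega

end SimpleGraph

namespace Finset

variable {ι κ M : Type*} [AddCommMonoid M] [DecidableEq ι] [DecidableEq κ]

lemma sum_offDiag_eq_sum_product {s : Finset ι} {f : ι → ι → M} (hf : ∀ a ∈ s, f a a = 0) :
    ∑ p ∈ s.offDiag, f p.1 p.2 = ∑ p ∈ s ×ˢ s, f p.1 p.2 := by
  refine sum_subset (fun p hp => ?_) fun p hp hp' => ?_
  · obtain ⟨h₁, h₂, -⟩ := mem_offDiag.1 hp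
    exact mem_product.2 ⟨h₁, h₂⟩
  · obtain ⟨a, b⟩ := p
    obtain ⟨ha, hb⟩ := mem_product.1 hp
    obtain rfl : a = b := by simpa [mem_offDiag, ha, hb] using hp'
    exact hf a ha

lemma sum_offDiag_product_add {s : Finset ι} {t : Finset κ} {f : ι → ι → M} {g : κ → κ → M}
    (hf : ∀ a ∈ s, f a a = 0) (hg : ∀ b ∈ t, g b b = 0) :
    ∑ p ∈ (s ×ˢ t).offDiag, (f p.1.1 p.2.1 + g p.1.2 p.2.2) =
      #t ^ 2 • ∑ p ∈ s.offDiag, f p.1 p.2 + #s ^ 2 • ∑ p ∈ t.offDiag, g p.1 p.2 := by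
  rw [sum_offDiag_eq_sum_product hf, sum_offDiag_eq_sum_product hg,
    sum_offDiag_eq_sum_product (f := fun x y : ι × κ => f x.1 y.1 + g x.2 y.2) fun x hx => by
      rw [hf _ (mem_product.1 hx).1, hg _ (mem_product.1 hx).2, add_zero]]
  simp only [sum_add_distrib, sum_product, sum_const, smul_sum, smul_smul, sq]

end Finset

theorem pw_boxProd {V W : Type*} [Fintype V] [Fintype W] [DecidableEq V] [DecidableEq W]
    (G : SimpleGraph V) (H : SimpleGraph W) (hG : G.Connected) (hH : H.Connected)
    (k₁ k₂ : ℕ) (hk₁ : k₁ = (peri G).card) (hk₂ : k₂ = (peri H).card) :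
    periWiener (G.boxProd H) =
      (k₂ : ℚ) ^ 2 * periWiener G + (k₁ : ℚ) ^ 2 * periWiener H := by
  subst hk₁ hk₂
  have := hG.nonempty
  have := hH.nonempty
  simp only [periWiener, peri_boxProd hG.preconnected hH.preconnected,
    dist_boxProd hG.preconnected hH.preconnected, Nat.cast_add]
  rw [sum_offDiag_product_add (f := fun a b => (G.dist a b : ℚ)) (g := fun a b => (H.dist a b : ℚ))
    (fun _ _ => by simp) (fun _ _ => by simp), nsmul_eq_mul, nsmul_eq_mul]
  push_cast
  ring
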